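/- Let n ≥ 1, d ≥ 1. There exists a constant c > 0 depending only on n and d such that for every normalized polynomial P of degree d in ℂⁿ with H = {z : P(z) = 0}, and every v ∈ Q with dist(v, H) ≥ 2ρ(n,d) = 1/(2(16(d+n))^n), one has |P(v)| ≥ c. -/

import Mathlib

noncomputable section

def unitCube (n : ℕ) : Set (EuclideanSpace ℂ (Fin n)) :=
  {z | ∀ i, (z i).re ∈ Set.Icc (0:ℝ) 1 ∧ (z i).im ∈ Set.Icc (0:ℝ) 1}

def mvNorm {n : ℕ} (P : MvPolynomial (Fin n) ℂ) : ℝ :=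
  ∑ α ∈ P.support, ‖P.coeff α‖

def zeroSet {n : ℕ} (P : MvPolynomial (Fin n) ℂ) : Set (EuclideanSpace ℂ (Fin n)) :=
  {z | MvPolynomial.eval (fun i => z i) P = 0}

def Qr (n : ℕ) (H : Set (EuclideanSpace ℂ (Fin n))) (r : ℝ) : Set (EuclideanSpace ℂ (Fin n)) :=
  unitCube n \ {z | Metric.infDist z H ≤ r}

def polyNorm (p : Polynomial ℂ) : ℝ := ∑ k ∈ p.support, ‖p.coeff k‖

def lineRestrict {n : ℕ} (P : MvPolynomial (Fin n) ℂ) (b w : EuclideanSpace ℂ (Fin n)) :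
    Polynomial ℂ :=
  MvPolynomial.aeval (fun i => Polynomial.C (b i) + Polynomial.C (w i) * Polynomial.X) P

def lineSet {n : ℕ} (b w : EuclideanSpace ℂ (Fin n)) : Set (EuclideanSpace ℂ (Fin n)) :=
  {z | ∃ t : ℂ, z = b + t • w}

/-! A compactness argument gives `c₁ > 0` such that every normalized `P` of degree `≤ d`
has a point `z` of the cube with `|P z| ≥ c₁`. Restrict `P` to the complex line through `v` and
`z`: the one-variable polynomial `q(t) = P(v + t(z - v))` has `|q 1| ≥ c₁`, and its roots `t` give
zeros of `P` at distance `|t|‖z - v‖` from `v`, so `|t| ≥ r` for some `r > 0` depending only on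
`n, d`. Factoring `q` over its roots, `|q 0| ≥ (r / (1 + r))^d |q 1|`. -/

section

open Polynomial

theorem Polynomial.Splits.pow_mul_norm_eval_le_norm_eval_zero {K : Type*} [NormedField K]
    {q : K[X]} (hq : q.Splits) {r : ℝ} (hr : 0 ≤ r) (hroots : ∀ t, q.IsRoot t → r ≤ ‖t‖)
    {x : K} (hx : ‖x‖ ≤ 1) :
    (r / (1 + r)) ^ q.natDegree * ‖q.eval x‖ ≤ ‖q.eval 0‖ := by
  have hfactor : ∀ t ∈ q.roots, r / (1 + r) * ‖x - t‖ ≤ ‖0 - t‖ := by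
    intro t ht
    have hrt : r ≤ ‖t‖ := hroots t (isRoot_of_mem_roots ht)
    rw [zero_sub, norm_neg, div_mul_eq_mul_div, div_le_iff₀ (by positivity)]
    nlinarith [norm_sub_le x t, norm_nonneg t]
  have hprod := Multiset.prod_map_le_prod_map₀ _ _ (fun t _ => by positivity) hfactor
  rw [Multiset.prod_map_mul, Multiset.map_const', Multiset.prod_replicate] at hprod
  have hnorm (y : K) : ‖(q.roots.map (y - ·)).prod‖ = (q.roots.map (‖y - ·‖)).prod := by
    rw [← normHom_apply, map_multiset_prod, Multiset.map_map]; rfl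
  rw [hq.eval_eq_prod_roots, hq.eval_eq_prod_roots, hq.natDegree_eq_card_roots, norm_mul,
    norm_mul, hnorm, hnorm, mul_left_comm]
  gcongr

theorem eval_lineRestrict {n : ℕ} (P : MvPolynomial (Fin n) ℂ) (b w : EuclideanSpace ℂ (Fin n))
    (t : ℂ) : (lineRestrict P b w).eval t = MvPolynomial.eval (fun i => b i + t * w i) P := by
  rw [lineRestrict, ← coe_aeval_eq_eval, MvPolynomial.comp_aeval_apply,
    MvPolynomial.aeval_eq_eval]
  congr 2 with i
  simp only [map_add, map_mul, aeval_C, aeval_X, Algebra.algebraMap_self, RingHom.id_apply]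
  ring

theorem natDegree_lineRestrict_le {n : ℕ} (P : MvPolynomial (Fin n) ℂ)
    (b w : EuclideanSpace ℂ (Fin n)) : (lineRestrict P b w).natDegree ≤ P.totalDegree := by
  have hlin (i : Fin n) : (C (b i) + C (w i) * X).natDegree ≤ 1 := by
    rw [add_comm]; exact natDegree_linear_le
  rw [lineRestrict, MvPolynomial.aeval_def, MvPolynomial.eval₂_eq]
  refine natDegree_sum_le_of_forall_le _ _ fun α hα => ?_
  rw [algebraMap_eq]
  refine (natDegree_C_mul_le _ _).trans <| (natDegree_prod_le _ _).trans ?_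
  calc ∑ i ∈ α.support, ((C (b i) + C (w i) * X) ^ α i).natDegree
      ≤ ∑ i ∈ α.support, α i := by
        gcongr with i
        exact (natDegree_pow_le_of_le _ (hlin i)).trans_eq (mul_one _)
    _ ≤ P.totalDegree := MvPolynomial.le_totalDegree hα

end

namespace MvPolynomial

variable {σ R : Type*} [CommSemiring R] {S : Finset (σ →₀ ℕ)}

def ofCoeffs (S : Finset (σ →₀ ℕ)) (a : S → R) : MvPolynomial σ R :=
  ∑ α : S, monomial (α : σ →₀ ℕ) (a α)

theorem continuous_eval_ofCoeffs [TopologicalSpace R] [IsTopologicalSemiring R] :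
    Continuous fun p : (S → R) × (σ → R) => eval p.2 (ofCoeffs S p.1) := by
  have heval (a : S → R) (z : σ → R) :
      eval z (ofCoeffs S a) = ∑ α : S, a α * eval z (monomial (α : σ →₀ ℕ) 1) := by
    simp [ofCoeffs, eval_monomial]
  simp_rw [heval]
  have h (α : S) : Continuous fun z : σ → R => eval z (monomial (α : σ →₀ ℕ) 1) :=
    continuous_eval _
  fun_prop

theorem coeff_ofCoeffs (a : S → R) (α : S) : (ofCoeffs S a).coeff α = a α := by
  classical
  simp [ofCoeffs, coeff_sum, coeff_monomial]

theorem ofCoeffs_coeff {P : MvPolynomial σ R} (h : P.support ⊆ S) :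
    ofCoeffs S (fun α => P.coeff α) = P := by
  conv_rhs => rw [P.as_sum]
  rw [ofCoeffs, Finset.sum_coe_sort S (fun α => monomial α (P.coeff α))]
  exact (Finset.sum_subset h fun α _ hα => by rw [notMem_support_iff.mp hα, map_zero]).symm

end MvPolynomial

open MvPolynomial Metric Set

theorem mvNorm_eq_sum_of_support_subset {n : ℕ} {P : MvPolynomial (Fin n) ℂ}
    {S : Finset (Fin n →₀ ℕ)} (h : P.support ⊆ S) : mvNorm P = ∑ α : S, ‖P.coeff α‖ := by
  rw [mvNorm, Finset.sum_coe_sort S (fun α => ‖P.coeff α‖)]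
  exact Finset.sum_subset h fun α _ hα => by rw [notMem_support_iff.mp hα, norm_zero]

theorem exists_pos_le_norm_eval_of_support_subset {n : ℕ} {K : Set (EuclideanSpace ℂ (Fin n))}
    (hK : IsCompact K) (hKP : ∀ P, K ⊆ zeroSet P → P = 0) (S : Finset (Fin n →₀ ℕ)) :
    ∃ c > 0, ∀ P : MvPolynomial (Fin n) ℂ, P.support ⊆ S → mvNorm P = 1 →
      ∃ z ∈ K, c ≤ ‖eval (fun i => z i) P‖ := by
  -- Coefficient vectors carry the ℓ¹ norm, so normalized polynomials form its unit sphere.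
  let F : PiLp 1 (fun _ : S => ℂ) → EuclideanSpace ℂ (Fin n) → ℝ :=
    fun a z => ‖eval (fun i => z i) (ofCoeffs S fun α => a α)‖
  have hFc : Continuous ↿F :=
    continuous_norm.comp <| continuous_eval_ofCoeffs.comp <|
      (PiLp.continuous_ofLp 1 _).prodMap (PiLp.continuous_ofLp 2 _)
  have hFK (a) : IsCompact (F a '' K) :=
    hK.image <| continuous_norm.comp <| (continuous_eval _).comp (PiLp.continuous_ofLp 2 _)
  have hpos : ∀ a ∈ sphere (0 : PiLp 1 (fun _ : S => ℂ)) 1, 0 < sSup (F a '' K) := by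
    intro a ha
    by_contra! hle
    have hzero : ofCoeffs S (fun α => a α) = 0 := by
      refine hKP _ fun z hz => ?_
      have h1 : F a z ≤ sSup (F a '' K) := le_csSup (hFK a).bddAbove (mem_image_of_mem _ hz)
      exact norm_le_zero_iff.mp (h1.trans hle)
    have : a = 0 := by
      ext α
      simpa [coeff_ofCoeffs] using congrArg (coeff α) hzero
    simp [this] at ha
  obtain ⟨c, hc, hcG⟩ :=
    (isCompact_sphere _ _).exists_forall_le' (hK.continuous_sSup hFc).continuousOn hpos
  refine ⟨c, hc, fun P hPS hP => ?_⟩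
  set a : PiLp 1 (fun _ : S => ℂ) := WithLp.toLp 1 fun α => P.coeff α
  have ha : a ∈ sphere 0 1 := by
    rw [mem_sphere_zero_iff_norm, PiLp.norm_eq_of_L1, ← hP, mvNorm_eq_sum_of_support_subset hPS]
  have hne : (F a '' K).Nonempty := by
    by_contra h
    have := hcG a ha
    rw [not_nonempty_iff_eq_empty.mp h, Real.sSup_empty] at this
    linarith
  obtain ⟨z, hz, hzmax⟩ := (hFK a).sSup_mem hne
  refine ⟨z, hz, ?_⟩
  rw [← ofCoeffs_coeff hPS]
  exact (hcG a ha).trans_eq hzmax.symm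

theorem unitCube_eq_preimage (n : ℕ) :
    unitCube n = WithLp.ofLp ⁻¹' univ.pi fun _ => Icc (0 : ℝ) 1 ×ℂ Icc 0 1 := by
  ext z; simp [unitCube, Complex.mem_reProdIm]

theorem isCompact_unitCube (n : ℕ) : IsCompact (unitCube n) := by
  rw [unitCube_eq_preimage]
  exact (PiLp.homeomorph 2 _).isCompact_preimage.2
    (isCompact_univ_pi fun _ => isCompact_Icc.reProdIm isCompact_Icc)

theorem eq_zero_of_unitCube_subset_zeroSet {n : ℕ} {P : MvPolynomial (Fin n) ℂ}
    (hP : unitCube n ⊆ zeroSet P) : P = 0 := by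
  have hinf : (Icc (0 : ℝ) 1 ×ℂ Icc 0 1).Infinite :=
    ((Icc_infinite zero_lt_one).image Complex.ofReal_injective.injOn).mono
      (by rintro _ ⟨x, hx, rfl⟩; simpa [Complex.mem_reProdIm] using hx)
  refine MvPolynomial.funext_set _ (fun _ => hinf) fun x hx => ?_
  rw [map_zero]
  exact hP (by rw [unitCube_eq_preimage]; exact hx)

theorem infDist_zeroSet_le_of_isRoot_lineRestrict {n : ℕ} {P : MvPolynomial (Fin n) ℂ}
    {v w : EuclideanSpace ℂ (Fin n)} {t : ℂ} (ht : (lineRestrict P v w).IsRoot t) :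
    infDist v (zeroSet P) ≤ ‖t‖ * ‖w‖ := by
  have hmem : v + t • w ∈ zeroSet P := by
    simpa [zeroSet, eval_lineRestrict] using ht
  calc infDist v (zeroSet P) ≤ dist v (v + t • w) := infDist_le_dist_of_mem hmem
    _ = ‖t‖ * ‖w‖ := by rw [dist_self_add_right, norm_smul]

theorem exists_pos_le_norm_eval_of_le_infDist {n : ℕ} {K : Set (EuclideanSpace ℂ (Fin n))}
    (hK : IsCompact K) (hKP : ∀ P, K ⊆ zeroSet P → P = 0) (d : ℕ) {R : ℝ} (hR : 0 < R) :
    ∃ c > 0, ∀ P : MvPolynomial (Fin n) ℂ, P.totalDegree ≤ d → mvNorm P = 1 →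
      ∀ v ∈ K, R ≤ infDist v (zeroSet P) → c ≤ ‖eval (fun i => v i) P‖ := by
  obtain ⟨c₁, hc₁, hlarge⟩ := exists_pos_le_norm_eval_of_support_subset hK hKP
    (Finsupp.finite_of_degree_le d).toFinset
  obtain ⟨D, hD, hKD⟩ := hK.isBounded.exists_pos_norm_le
  set r := R / (2 * D)
  have hr : 0 < r := by positivity
  refine ⟨(r / (1 + r)) ^ d * c₁, by positivity, fun P hPd hP v hv hRv => ?_⟩
  obtain ⟨z, hz, hPz⟩ :=
    hlarge P (fun α hα => (Set.Finite.mem_toFinset _).2 ((le_totalDegree hα).trans hPd)) hP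
  set q := lineRestrict P v (z - v)
  have hroots (t : ℂ) (ht : q.IsRoot t) : r ≤ ‖t‖ := by
    have hRt := hRv.trans (infDist_zeroSet_le_of_isRoot_lineRestrict ht)
    have hw : ‖z - v‖ ≤ 2 * D := (norm_sub_le _ _).trans (by linarith [hKD z hz, hKD v hv])
    rw [div_le_iff₀ (by positivity)]
    nlinarith [norm_nonneg t]
  have hq1 : q.eval 1 = eval (fun i => z i) P := by simp [q, eval_lineRestrict]
  have hq0 : q.eval 0 = eval (fun i => v i) P := by simp [q, eval_lineRestrict]
  have key := (IsAlgClosed.splits q).pow_mul_norm_eval_le_norm_eval_zero hr.le hroots norm_one.le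
  rw [hq1, hq0] at key
  have hratio : r / (1 + r) ≤ 1 := by rw [div_le_one (by positivity)]; linarith
  calc (r / (1 + r)) ^ d * c₁ ≤ (r / (1 + r)) ^ q.natDegree * ‖eval (fun i => z i) P‖ :=
        mul_le_mul (pow_le_pow_of_le_one (by positivity) hratio
          ((natDegree_lineRestrict_le P v _).trans hPd)) hPz hc₁.le (by positivity)
    _ ≤ _ := key

theorem stmt17_general (n d : ℕ) :
    ∃ c : ℝ, 0 < c ∧
      ∀ P : MvPolynomial (Fin n) ℂ, P.totalDegree = d → mvNorm P = 1 →
        ∀ v ∈ unitCube n,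
          1 / (2 * (16 * ((d : ℝ) + n)) ^ n) ≤ Metric.infDist v (zeroSet P) →
          c ≤ ‖MvPolynomial.eval (fun i => v i) P‖ := by
  have hR : (0 : ℝ) < 1 / (2 * (16 * ((d : ℝ) + n)) ^ n) := by
    rcases Nat.eq_zero_or_pos n with rfl | hn_pos
    · norm_num
    · have : (0 : ℝ) < 16 * ((d : ℝ) + n) := by
        have : (0 : ℝ) < n := Nat.cast_pos.mpr hn_pos
        positivity
      positivity
  obtain ⟨c, hc, h⟩ := exists_pos_le_norm_eval_of_le_infDist (isCompact_unitCube n)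
    (fun _ => eq_zero_of_unitCube_subset_zeroSet) d hR
  exact ⟨c, hc, fun P hPd => h P hPd.le⟩

theorem stmt17 (n d : ℕ) (hn : 1 ≤ n) (hd : 1 ≤ d) :
    ∃ c : ℝ, 0 < c ∧
      ∀ P : MvPolynomial (Fin n) ℂ, P.totalDegree = d → mvNorm P = 1 →
        ∀ v ∈ unitCube n,
          1 / (2 * (16 * ((d : ℝ) + n)) ^ n) ≤ Metric.infDist v (zeroSet P) →
          c ≤ ‖MvPolynomial.eval (fun i => v i) P‖ :=
  stmt17_general n d
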